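/- Let R be an integral domain which is a ℚ-algebra and f ∈ R⟦X⟧, with flow Φ(X,T) ∈ R⟦X,T⟧. Then the formal partial derivative of Φ with respect to T equals the substitution of Φ for the variable X in f: ∂Φ/∂T = f(Φ(X,T)) in R⟦X,T⟧; moreover f · ∂Φ/∂X = ∂Φ/∂T. In other words, the flow formally solves the autonomous differential equation δ_t Φ = f(Φ). -/

import Mathlib

open PowerSeries

/-- The autonomous polynomials of a power series: `A_1(f) = f` and
`A_{n+1}(f) = f·δ(A_n(f))`.  Here `autPolyPS f m` is `A_{m+1}(f)`. -/
noncomputable def autPolyPS {R : Type*} [CommRing R] (f : PowerSeries R) :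
    ℕ → PowerSeries R
  | 0 => f
  | m + 1 => f * derivativeFun (autPolyPS f m)

/-- The flow `Φ(X,T) = X + ∑_{n≥1} A_n(f)(X)·T^n/n!` of `f ∈ R⟦X⟧`, as an element of the
two-variable power series ring `R⟦X,T⟧` (variable `0` is `X`, variable `1` is `T`). -/
noncomputable def flowMv {R : Type*} [CommRing R] [Algebra ℚ R] (f : PowerSeries R) :
    MvPowerSeries (Fin 2) R :=
  fun d => if d 1 = 0 then (if d 0 = 1 then 1 else 0)
    else algebraMap ℚ R (1 / (d 1).factorial) *
      PowerSeries.coeff (d 0) (autPolyPS f (d 1 - 1))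

/-- Formal partial derivative of a two-variable power series with respect to variable `i`. -/
noncomputable def pderiv2 {R : Type*} [CommRing R] (i : Fin 2)
    (Φ : MvPowerSeries (Fin 2) R) : MvPowerSeries (Fin 2) R :=
  fun d => ((d i + 1 : ℕ) : R) * MvPowerSeries.coeff (d + Finsupp.single i 1) Φ

/-- Substitution of a multivariable power series `u` with zero constant coefficient for the
variable of a one-variable power series `f`. -/
noncomputable def substPS {R : Type*} [CommRing R] {σ : Type*} (u : MvPowerSeries σ R)
    (f : PowerSeries R) : MvPowerSeries σ R :=
  fun d => ∑ k ∈ Finset.range ((d.sum fun _ n => n) + 1),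
    PowerSeries.coeff k f * MvPowerSeries.coeff d (u ^ k)

/-! Let `F ∈ R⟦X,T⟧` be `f(X)` and call `U` a solution of the transport equation if
`∂U/∂T = F·∂U/∂X`. The recursion `A_{n+1} = f·δ(A_n)` says exactly that the flow `Φ` is a
solution, which is the second claim. Solutions form the kernel of the derivation `∂_T - F·∂_X`,
so they are closed under powers, and since this derivation lowers the order by at most one, also
under substitution `U ↦ g(U)` when `U(0,0) = 0`. A solution is determined by `U(X,0)`: its
`T^b` coefficient is `(f·δ)^b U(X,0) / b!`. As `Φ(X,0) = X`, the solution `f(Φ)` has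
`T^b` coefficient `(f·δ)^b f / b! = A_{b+1}(f) / b!`, which is also that of `∂Φ/∂T`. -/

theorem autPolyPS_eq_iterate {R : Type*} [CommRing R] (f : PowerSeries R) (b : ℕ) :
    autPolyPS f b = (fun h => f * d⁄dX R h)^[b] f := by
  induction b with
  | zero => rfl
  | succ b ih => rw [Function.iterate_succ_apply', ← ih]; rfl

theorem isUnit_natCast_add_one {R : Type*} [Ring R] [Algebra ℚ R] (n : ℕ) :
    IsUnit ((n : R) + 1) := by
  simpa using (Nat.cast_add_one_ne_zero n : ((n : ℚ) + 1) ≠ 0).isUnit.map (algebraMap ℚ R)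

theorem natCast_add_one_mul_inv_factorial_succ {R : Type*} [Ring R] [Algebra ℚ R] (n : ℕ) :
    ((n : R) + 1) * algebraMap ℚ R (1 / (n + 1).factorial) =
      algebraMap ℚ R (1 / n.factorial) := by
  rw [← map_natCast (algebraMap ℚ R), ← map_one (algebraMap ℚ R), ← map_add, ← map_mul,
    Nat.factorial_succ]
  congr 1
  push_cast
  field_simp

namespace MvPowerSeries

section Substitution

variable {σ R : Type*} [CommRing R]

theorem le_order_pderiv (i : σ) {w : MvPowerSeries σ R} {n : ℕ}
    (hw : ((n + 1 : ℕ) : ℕ∞) ≤ w.order) : (n : ℕ∞) ≤ (pderiv R i w).order := by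
  refine nat_le_order fun d hd => ?_
  rw [coeff_pderiv, coeff_of_lt_order, zero_mul]
  refine lt_of_lt_of_le ?_ hw
  simp only [map_add, Finsupp.degree_single]
  exact_mod_cast Nat.add_lt_add_right hd 1

theorem coeff_substPS_eq_sum_range {u : MvPowerSeries σ R} (hu : constantCoeff u = 0)
    (g : PowerSeries R) {d : σ →₀ ℕ} {N : ℕ} (hN : d.degree < N) :
    coeff d (substPS u g) = ∑ k ∈ Finset.range N, PowerSeries.coeff k g * coeff d (u ^ k) := by
  change ∑ k ∈ Finset.range (d.degree + 1), _ = _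
  refine Finset.sum_subset (Finset.range_subset_range.mpr hN) fun k _ hk => ?_
  rw [Finset.mem_range, not_lt] at hk
  rw [coeff_of_lt_order, mul_zero]
  exact lt_of_lt_of_le (by exact_mod_cast hk) (le_order_pow_of_constantCoeff_eq_zero k hu)

theorem map_substPS_eq_zero (D : Derivation R (MvPowerSeries σ R) (MvPowerSeries σ R))
    (hD : ∀ (n : ℕ) (w : MvPowerSeries σ R), ((n + 1 : ℕ) : ℕ∞) ≤ w.order →
      (n : ℕ∞) ≤ (D w).order)
    {u : MvPowerSeries σ R} (hu₀ : constantCoeff u = 0) (hu : D u = 0) (g : PowerSeries R) :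
    D (substPS u g) = 0 := by
  have hpow (k : ℕ) : D (u ^ k) = 0 := by rw [Derivation.leibniz_pow, hu, smul_zero, smul_zero]
  refine order_eq_top_iff.mp (ENat.eq_top_iff_forall_ge.mpr fun n => ?_)
  set P := ∑ k ∈ Finset.range (n + 1), PowerSeries.coeff k g • u ^ k
  have hP : D P = 0 := by simp [P, hpow]
  have hE : ((n + 1 : ℕ) : ℕ∞) ≤ (substPS u g - P).order := nat_le_order fun d hd => by
    rw [map_sub, coeff_substPS_eq_sum_range hu₀ g hd, sub_eq_zero, map_sum]
    simp
  simpa [hP] using hD n _ hE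

theorem pderiv_substPS_of_pderiv_eq_mul (F : MvPowerSeries σ R) {i j : σ}
    {u : MvPowerSeries σ R} (hu₀ : constantCoeff u = 0) (hu : pderiv R j u = F * pderiv R i u)
    (g : PowerSeries R) : pderiv R j (substPS u g) = F * pderiv R i (substPS u g) := by
  have key := map_substPS_eq_zero (pderiv R j - F • pderiv R i) ?_ hu₀ (by simp [hu]) g
  · simpa [sub_eq_zero] using key
  intro n w hw
  have hj := le_order_pderiv j hw
  have hi : (n : ℕ∞) ≤ (F * pderiv R i w).order :=
    (le_order_pderiv i hw).trans (le_add_self.trans le_order_mul)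
  rw [Derivation.sub_apply, Derivation.smul_apply, smul_eq_mul, sub_eq_add_neg]
  exact (le_min hj (by rwa [order_neg])).trans min_order_le_add

theorem coeff_substPS_X [DecidableEq σ] (i : σ) (g : PowerSeries R) (d : σ →₀ ℕ) :
    coeff d (substPS (X i) g) =
      if d = Finsupp.single i (d i) then PowerSeries.coeff (d i) g else 0 := by
  change ∑ k ∈ Finset.range (d.degree + 1), _ = _
  simp only [coeff_X_pow, mul_ite, mul_one, mul_zero]
  split_ifs with hd
  · rw [Finset.sum_eq_single_of_mem (d i)]
    · rw [if_pos hd]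
    · rw [Finset.mem_range, hd]
      simp
    · intro k _ hk
      rw [if_neg]
      rintro rfl
      simp at hk
  · refine Finset.sum_eq_zero fun k _ => if_neg ?_
    rintro rfl
    simp at hd

theorem X_dvd_substPS_sub {j : σ} {u v : MvPowerSeries σ R} (h : X j ∣ u - v)
    (g : PowerSeries R) : X j ∣ substPS u g - substPS v g := by
  refine X_dvd_iff.mpr fun m hm => sub_eq_zero.mpr (Finset.sum_congr rfl fun k _ => ?_)
  have hk := X_dvd_iff.mp (h.trans (sub_dvd_pow_sub_pow u v k)) m hm
  rw [map_sub, sub_eq_zero] at hk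
  rw [hk]

end Substitution

section TwoVariables

variable {R : Type*} [CommRing R]

theorem pderiv2_eq_pderiv (i : Fin 2) (u : MvPowerSeries (Fin 2) R) :
    pderiv2 i u = pderiv R i u := by
  ext d
  rw [coeff_pderiv, mul_comm, ← Nat.cast_succ]
  rfl

noncomputable def expXT (a b : ℕ) : Fin 2 →₀ ℕ := Finsupp.single 0 a + Finsupp.single 1 b

@[simp] theorem expXT_apply_zero (a b : ℕ) : expXT a b 0 = a := by simp [expXT]

@[simp] theorem expXT_apply_one (a b : ℕ) : expXT a b 1 = b := by simp [expXT]

theorem expXT_zero_eq_single (a : ℕ) : expXT a 0 = Finsupp.single 0 a := by simp [expXT]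

theorem expXT_eq_iff {a b : ℕ} {d : Fin 2 →₀ ℕ} : expXT a b = d ↔ a = d 0 ∧ b = d 1 := by
  refine ⟨by rintro rfl; simp, fun ⟨ha, hb⟩ => ?_⟩
  ext i
  fin_cases i <;> simp [ha, hb]

theorem expXT_add_single_zero (a b : ℕ) : expXT a b + Finsupp.single 0 1 = expXT (a + 1) b :=
  (expXT_eq_iff.mpr (by simp)).symm

theorem expXT_add_single_one (a b : ℕ) : expXT a b + Finsupp.single 1 1 = expXT a (b + 1) :=
  (expXT_eq_iff.mpr (by simp)).symm

theorem ext_expXT {u v : MvPowerSeries (Fin 2) R}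
    (h : ∀ a b, coeff (expXT a b) u = coeff (expXT a b) v) : u = v := by
  ext d
  have hd : expXT (d 0) (d 1) = d := expXT_eq_iff.mpr ⟨rfl, rfl⟩
  rw [← hd]
  exact h _ _

theorem coeff_pderiv_zero_expXT (u : MvPowerSeries (Fin 2) R) (a b : ℕ) :
    coeff (expXT a b) (pderiv R 0 u) = coeff (expXT (a + 1) b) u * (a + 1) := by
  rw [coeff_pderiv, expXT_apply_zero, expXT_add_single_zero]

theorem coeff_pderiv_one_expXT (u : MvPowerSeries (Fin 2) R) (a b : ℕ) :
    coeff (expXT a b) (pderiv R 1 u) = coeff (expXT a (b + 1)) u * (b + 1) := by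
  rw [coeff_pderiv, expXT_apply_one, expXT_add_single_one]

theorem coeff_substPS_X_zero_mul (f : PowerSeries R) (v : MvPowerSeries (Fin 2) R) (a b : ℕ) :
    coeff (expXT a b) (substPS (X 0) f * v) =
      ∑ p ∈ Finset.HasAntidiagonal.antidiagonal a,
        PowerSeries.coeff p.1 f * coeff (expXT p.2 b) v := by
  rw [coeff_mul]
  symm
  refine Finset.sum_of_injOn (fun p => (Finsupp.single 0 p.1, expXT p.2 b)) ?_ ?_ ?_ ?_
  · intro p _ q _ h
    simp only [Prod.mk.injEq] at h
    have h1 := congrArg (· 0) h.1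
    have h2 := congrArg (· 0) h.2
    simp only [Finsupp.single_eq_same, expXT_apply_zero] at h1 h2
    exact Prod.ext h1 h2
  · intro p hp
    simp only [Finset.mem_coe, Finset.HasAntidiagonal.mem_antidiagonal] at hp ⊢
    rw [eq_comm, expXT_eq_iff]
    simp [hp]
  · intro q hq hq'
    simp only [Finset.HasAntidiagonal.mem_antidiagonal] at hq
    rw [coeff_substPS_X, if_neg, zero_mul]
    intro hq₁
    have h0 : q.1 0 + q.2 0 = a := by simpa using congrArg (· 0) hq
    have h1 : q.1 1 + q.2 1 = b := by simpa using congrArg (· 1) hq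
    have hq₁1 : q.1 1 = 0 := by rw [hq₁]; simp
    exact hq' ⟨(q.1 0, q.2 0), by simpa using h0,
      Prod.ext hq₁.symm (expXT_eq_iff.mpr ⟨rfl, by omega⟩)⟩
  · intro p _
    simp [coeff_substPS_X]

theorem coeff_expXT_of_pderiv_one_eq [Algebra ℚ R] {f g : PowerSeries R}
    {U : MvPowerSeries (Fin 2) R} (hU : pderiv R 1 U = substPS (X 0) f * pderiv R 0 U)
    (hU₀ : ∀ a, coeff (expXT a 0) U = PowerSeries.coeff a g) (a b : ℕ) :
    coeff (expXT a b) U = algebraMap ℚ R (1 / b.factorial) *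
      PowerSeries.coeff a ((fun h => f * d⁄dX R h)^[b] g) := by
  induction b generalizing a with
  | zero => simp [hU₀]
  | succ b ih =>
    rw [← (isUnit_natCast_add_one b).mul_left_inj, ← coeff_pderiv_one_expXT, hU,
      coeff_substPS_X_zero_mul, Function.iterate_succ_apply', mul_right_comm, mul_comm _ (_ + 1),
      natCast_add_one_mul_inv_factorial_succ, PowerSeries.coeff_mul, Finset.mul_sum]
    refine Finset.sum_congr rfl fun p _ => ?_
    rw [coeff_pderiv_zero_expXT, ih, PowerSeries.coeff_derivative]
    ring

end TwoVariables

section Flow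

variable {R : Type*} [CommRing R] [Algebra ℚ R] (f : PowerSeries R)

theorem coeff_flowMv_expXT_zero (a : ℕ) :
    coeff (expXT a 0) (flowMv f) = PowerSeries.coeff a PowerSeries.X := by
  simp [coeff_apply, flowMv, PowerSeries.coeff_X]

theorem coeff_flowMv_expXT_succ (a b : ℕ) :
    coeff (expXT a (b + 1)) (flowMv f) =
      algebraMap ℚ R (1 / (b + 1).factorial) * PowerSeries.coeff a (autPolyPS f b) := by
  simp [coeff_apply, flowMv]

theorem constantCoeff_flowMv : constantCoeff (flowMv f) = 0 := by
  simp [← coeff_zero_eq_constantCoeff_apply, coeff_apply, flowMv]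

theorem X_one_dvd_flowMv_sub_X_zero : X 1 ∣ flowMv f - X 0 := by
  refine X_dvd_iff.mpr fun m hm => ?_
  have hd : expXT (m 0) 0 = m := expXT_eq_iff.mpr ⟨rfl, hm.symm⟩
  rw [← hd, map_sub, coeff_flowMv_expXT_zero, expXT_zero_eq_single, coeff_X, PowerSeries.coeff_X,
    sub_eq_zero]
  simp [Finsupp.single_eq_single_iff]

theorem coeff_substPS_flowMv_expXT_zero (g : PowerSeries R) (a : ℕ) :
    coeff (expXT a 0) (substPS (flowMv f) g) = PowerSeries.coeff a g := by
  have h := X_dvd_iff.mp (X_dvd_substPS_sub (X_one_dvd_flowMv_sub_X_zero f) g) (expXT a 0)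
    (expXT_apply_one a 0)
  rw [map_sub, sub_eq_zero] at h
  rw [h, coeff_substPS_X, expXT_zero_eq_single]
  simp

theorem coeff_pderiv_one_flowMv (a b : ℕ) :
    coeff (expXT a b) (pderiv R 1 (flowMv f)) =
      algebraMap ℚ R (1 / b.factorial) * PowerSeries.coeff a (autPolyPS f b) := by
  rw [coeff_pderiv_one_expXT, coeff_flowMv_expXT_succ, mul_right_comm, mul_comm _ (_ + 1),
    natCast_add_one_mul_inv_factorial_succ]

theorem pderiv_one_flowMv :
    pderiv R 1 (flowMv f) = substPS (X 0) f * pderiv R 0 (flowMv f) := by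
  refine ext_expXT fun a b => ?_
  rw [coeff_pderiv_one_flowMv, coeff_substPS_X_zero_mul]
  simp only [coeff_pderiv_zero_expXT]
  cases b with
  | zero =>
    rw [Nat.factorial_zero, Nat.cast_one, div_one, map_one, one_mul,
      show autPolyPS f 0 = f * d⁄dX R PowerSeries.X by simp [autPolyPS], PowerSeries.coeff_mul]
    refine Finset.sum_congr rfl fun p _ => ?_
    rw [coeff_flowMv_expXT_zero, PowerSeries.coeff_derivative]
  | succ b =>
    rw [show autPolyPS f (b + 1) = f * d⁄dX R (autPolyPS f b) from rfl, PowerSeries.coeff_mul,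
      Finset.mul_sum]
    refine Finset.sum_congr rfl fun p _ => ?_
    rw [coeff_flowMv_expXT_succ, PowerSeries.coeff_derivative]
    ring

end Flow

end MvPowerSeries

theorem flowMv_solves_general {R : Type*} [CommRing R] [Algebra ℚ R]
    (f : PowerSeries R) :
    pderiv2 1 (flowMv f) = substPS (flowMv f) f ∧
    substPS (MvPowerSeries.X 0) f * pderiv2 0 (flowMv f) = pderiv2 1 (flowMv f) := by
  have hΦ := MvPowerSeries.pderiv_one_flowMv f
  simp only [MvPowerSeries.pderiv2_eq_pderiv]
  refine ⟨MvPowerSeries.ext_expXT fun a b => ?_, hΦ.symm⟩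
  rw [MvPowerSeries.coeff_pderiv_one_flowMv, autPolyPS_eq_iterate,
    MvPowerSeries.coeff_expXT_of_pderiv_one_eq
      (MvPowerSeries.pderiv_substPS_of_pderiv_eq_mul _ (MvPowerSeries.constantCoeff_flowMv f) hΦ f)
      (MvPowerSeries.coeff_substPS_flowMv_expXT_zero f f)]

/-- The flow `Φ(X,T)` of `f` formally solves the autonomous differential equation
`δ_t Φ = f(Φ)`: one has `∂Φ/∂T = f(Φ(X,T))` and moreover `f·∂Φ/∂X = ∂Φ/∂T` in `R⟦X,T⟧`. -/
theorem flowMv_solves {R : Type*} [CommRing R] [IsDomain R] [Algebra ℚ R]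
    (f : PowerSeries R) :
    pderiv2 1 (flowMv f) = substPS (flowMv f) f ∧
    substPS (MvPowerSeries.X 0) f * pderiv2 0 (flowMv f) = pderiv2 1 (flowMv f) :=
  flowMv_solves_general f
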